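/- Let (Ω, ℱ, P) be atomless and X₁, …, Xₙ integrable. The following are equivalent: (i) VaR_α(∑ᵢ Xᵢ) ≤ ∑ᵢ VaR_α(Xᵢ) for all α ∈ (0,1); (ii) (X₁,…,Xₙ) is comonotonic; (iii) VaR_α(∑ᵢ Xᵢ) = ∑ᵢ VaR_α(Xᵢ) for all α ∈ (0,1). -/

import Mathlib

open MeasureTheory ProbabilityTheory
open scoped NNReal

/-- Value at risk: left-continuous generalized inverse of the distribution function. -/
noncomputable def VaR {Ω : Type*} [MeasurableSpace Ω] (P : Measure Ω) (X : Ω → ℝ) (α : ℝ) : ℝ :=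
  sInf {x : ℝ | α ≤ (P {ω | X ω ≤ x}).toReal}

/-- A set `A ⊆ ℝⁿ` is comonotonic. -/
def ComonotonicSet {n : ℕ} (A : Set (Fin n → ℝ)) : Prop :=
  ∀ x ∈ A, ∀ y ∈ A, (∃ i, x i < y i) → ∀ j, x j ≤ y j

/-- Topological support of a measure. -/
def measSupport {E : Type*} [TopologicalSpace E] [MeasurableSpace E] (μ : Measure E) : Set E :=
  {x | ∀ U : Set E, IsOpen U → x ∈ U → 0 < μ U}

/-- A random vector is comonotonic iff the support of its distribution is comonotonic. -/
def Comonotonic {Ω : Type*} [MeasurableSpace Ω] (P : Measure Ω) {n : ℕ}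
    (X : Fin n → Ω → ℝ) : Prop :=
  ComonotonicSet (measSupport (P.map (fun ω i => X i ω)))

/-- An atomless probability space. -/
def Atomless {Ω : Type*} [MeasurableSpace Ω] (P : Measure Ω) : Prop :=
  ∀ A : Set Ω, MeasurableSet A → 0 < P A →
    ∃ B, MeasurableSet B ∧ B ⊆ A ∧ 0 < P B ∧ P B < P A

/-- `U` is uniformly distributed on `(0,1)`. -/
def UniformOn01 {Ω : Type*} [MeasurableSpace Ω] (P : Measure Ω) (U : Ω → ℝ) : Prop :=
  P.map U = volume.restrict (Set.Ioo (0 : ℝ) 1)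

open MeasureTheory ProbabilityTheory Set Filter Topology
open scoped ENNReal
set_option linter.unusedSectionVars false
set_option linter.unusedVariables false

namespace VaRAux

variable {Ω : Type*} [MeasurableSpace Ω] (P : Measure Ω) [IsProbabilityMeasure P]

/-- distribution function -/
noncomputable def df (Y : Ω → ℝ) (x : ℝ) : ℝ := (P {ω | Y ω ≤ x}).toReal

variable {Y : Ω → ℝ}

lemma df_mono : Monotone (df P Y) := by
  intro x y hxy
  exact ENNReal.toReal_mono (measure_ne_top _ _)
    (measure_mono fun ω hω => le_trans hω hxy)

lemma df_nonneg (x : ℝ) : 0 ≤ df P Y x := ENNReal.toReal_nonneg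

lemma df_le_one (x : ℝ) : df P Y x ≤ 1 := by
  have : P {ω | Y ω ≤ x} ≤ 1 := prob_le_one
  simpa [df] using ENNReal.toReal_mono (by simp) this

lemma le_df_of_forall (hY : Measurable Y) {α x : ℝ}
    (h : ∀ ε > 0, α ≤ df P Y (x + ε)) : α ≤ df P Y x := by
  set s : ℕ → Set Ω := fun n => {ω | Y ω ≤ x + 1 / (n + 1)} with hs
  have hanti : Antitone s := by
    intro m k hmk ω hω
    refine le_trans hω (add_le_add_right ?_ x)
    apply one_div_le_one_div_of_le
    · positivity
    · have : (m:ℝ) ≤ k := by exact_mod_cast hmk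
      linarith
  have hinter : ⋂ n, s n = {ω | Y ω ≤ x} := by
    ext ω
    simp only [mem_iInter, hs, mem_setOf_eq]
    constructor
    · intro h'
      by_contra hlt
      push_neg at hlt
      obtain ⟨k, hk⟩ := exists_nat_one_div_lt (sub_pos.2 hlt)
      have := h' k
      nlinarith [hk]
    · intro h' n
      have : (0:ℝ) < 1 / (n + 1) := by positivity
      linarith
  have htend : Tendsto (P ∘ s) atTop (𝓝 (P {ω | Y ω ≤ x})) := by
    rw [← hinter]
    exact tendsto_measure_iInter_atTop (s := s)
      (fun n => (hY measurableSet_Iic).nullMeasurableSet) hanti ⟨0, measure_ne_top _ _⟩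
  have htend' : Tendsto (fun n => (P (s n)).toReal) atTop (𝓝 (P {ω | Y ω ≤ x}).toReal) :=
    (ENNReal.tendsto_toReal (measure_ne_top _ _)).comp htend
  refine ge_of_tendsto htend' (Eventually.of_forall fun n => ?_)
  exact h _ (by positivity)

lemma exists_le_df (hY : Measurable Y) {α : ℝ} (hα : α < 1) :
    ∃ x, α ≤ df P Y x := by
  set s : ℕ → Set Ω := fun n => {ω | Y ω ≤ n} with hs
  have hmono : Monotone s := by
    intro m k hmk ω hω
    simp only [hs, mem_setOf_eq] at hω ⊢
    have : (m:ℝ) ≤ k := by exact_mod_cast hmk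
    linarith
  have hunion : ⋃ n, s n = univ := by
    ext ω
    simp only [mem_iUnion, hs, mem_setOf_eq, mem_univ, iff_true]
    obtain ⟨k, hk⟩ := exists_nat_ge (Y ω)
    exact ⟨k, hk⟩
  have htend : Tendsto (P ∘ s) atTop (𝓝 1) := by
    have := tendsto_measure_iUnion_atTop (μ := P) hmono
    rwa [hunion, measure_univ] at this
  have htend' : Tendsto (fun n => (P (s n)).toReal) atTop (𝓝 1) := by
    have := (ENNReal.tendsto_toReal (by simp)).comp htend
    simpa [Function.comp_def] using this
  have := (htend'.eventually (eventually_gt_nhds hα)).exists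
  obtain ⟨k, hk⟩ := this
  exact ⟨k, hk.le⟩

lemma exists_df_lt (hY : Measurable Y) {α : ℝ} (hα : 0 < α) :
    ∃ x, df P Y x < α := by
  set s : ℕ → Set Ω := fun n => {ω | Y ω ≤ -(n:ℝ)} with hs
  have hanti : Antitone s := by
    intro m k hmk ω hω
    simp only [hs, mem_setOf_eq] at hω ⊢
    have : (m:ℝ) ≤ k := by exact_mod_cast hmk
    linarith
  have hinter : ⋂ n, s n = ∅ := by
    ext ω
    simp only [mem_iInter, hs, mem_setOf_eq, mem_empty_iff_false, iff_false, not_forall]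
    obtain ⟨k, hk⟩ := exists_nat_gt (-(Y ω))
    refine ⟨k, ?_⟩
    intro hc
    linarith
  have htend : Tendsto (P ∘ s) atTop (𝓝 0) := by
    have := tendsto_measure_iInter_atTop (μ := P) (s := s)
      (fun n => (hY measurableSet_Iic).nullMeasurableSet) hanti ⟨0, measure_ne_top _ _⟩
    rwa [hinter, measure_empty] at this
  have htend' : Tendsto (fun n => (P (s n)).toReal) atTop (𝓝 0) := by
    have := (ENNReal.tendsto_toReal (by simp : (0:ℝ≥0∞) ≠ ⊤)).comp htend
    simpa [Function.comp_def] using this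
  obtain ⟨k, hk⟩ := (htend'.eventually (eventually_lt_nhds hα)).exists
  refine ⟨-(k:ℝ), ?_⟩
  exact hk

lemma bddBelow_df_set (hY : Measurable Y) {α : ℝ} (hα : 0 < α) :
    BddBelow {x | α ≤ df P Y x} := by
  obtain ⟨x₀, hx₀⟩ := exists_df_lt P hY hα
  refine ⟨x₀, fun y hy => ?_⟩
  by_contra hlt
  push_neg at hlt
  exact absurd (le_trans hy (df_mono P hlt.le)) (not_le.2 hx₀)

lemma nonempty_df_set (hY : Measurable Y) {α : ℝ} (hα : α < 1) :
    {x | α ≤ df P Y x}.Nonempty := exists_le_df P hY hα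

lemma VaR_le_iff (hY : Measurable Y) {α x : ℝ} (hα : α ∈ Ioo (0:ℝ) 1) :
    VaR P Y α ≤ x ↔ α ≤ df P Y x := by
  constructor
  · intro h
    refine le_df_of_forall P hY fun ε hε => ?_
    have hne : {y | α ≤ df P Y y}.Nonempty := nonempty_df_set P hY hα.2
    by_contra hc
    push_neg at hc
    have : x + ε ≤ VaR P Y α := by
      refine le_csInf hne fun y hy => ?_
      by_contra hlt
      push_neg at hlt
      exact absurd (le_trans hy (df_mono P hlt.le)) (not_le.2 hc)
    linarith
  · intro h
    exact csInf_le (bddBelow_df_set P hY hα.1) h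

lemma lt_VaR_iff (hY : Measurable Y) {α x : ℝ} (hα : α ∈ Ioo (0:ℝ) 1) :
    x < VaR P Y α ↔ df P Y x < α := by
  rw [← not_le, ← not_le, VaR_le_iff P hY hα]

lemma le_df_VaR (hY : Measurable Y) {α : ℝ} (hα : α ∈ Ioo (0:ℝ) 1) :
    α ≤ df P Y (VaR P Y α) := (VaR_le_iff P hY hα).1 le_rfl

lemma VaR_mono (hY : Measurable Y) {α β : ℝ} (hα : α ∈ Ioo (0:ℝ) 1)
    (hβ : β ∈ Ioo (0:ℝ) 1) (h : α ≤ β) : VaR P Y α ≤ VaR P Y β :=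
  (VaR_le_iff P hY hα).2 (le_trans h (le_df_VaR P hY hβ))

lemma tendsto_VaR (hY : Measurable Y) {α : ℝ} (hα : α ∈ Ioo (0:ℝ) 1) {u : ℕ → ℝ}
    (hu : ∀ m, u m ∈ Ioo (0:ℝ) 1) (hlt : ∀ m, u m < α)
    (hten : Tendsto u atTop (𝓝 α)) :
    Tendsto (fun m => VaR P Y (u m)) atTop (𝓝 (VaR P Y α)) := by
  refine tendsto_order.2 ⟨fun c hc => ?_, fun c hc => ?_⟩
  · -- eventually c < VaR (u m)
    have hex : ∃ β, β ∈ Ioo (0:ℝ) 1 ∧ β < α ∧ c < VaR P Y β := by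
      by_contra hno
      push_neg at hno
      have hdf : α ≤ df P Y c := by
        have hall : ∀ β, β ∈ Ioo (0:ℝ) 1 → β < α → β ≤ df P Y c := by
          intro β hβ hβα
          have := hno β hβ hβα
          exact le_trans (le_df_VaR P hY hβ) (df_mono P this)
        by_contra hcon
        push_neg at hcon
        have h1 : max (df P Y c) (α / 2) < α := by
          rcases max_cases (df P Y c) (α/2) with ⟨h', _⟩ | ⟨h', _⟩ <;> rw [h'] <;> linarith [hα.1]
        set β := (max (df P Y c) (α / 2) + α) / 2 with hβdef
        have hβmem : β ∈ Ioo (0:ℝ) 1 := by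
          constructor
          · have := le_max_right (df P Y c) (α/2); have := hα.1; simp only [hβdef]; nlinarith
          · have := hα.2; simp only [hβdef]; nlinarith [le_max_left (df P Y c) (α/2)]
        have hβα : β < α := by simp only [hβdef]; linarith
        have := hall β hβmem hβα
        have : df P Y c < β := by simp only [hβdef]; nlinarith [le_max_left (df P Y c) (α/2)]
        linarith [hall β hβmem hβα]
      exact absurd ((VaR_le_iff P hY hα).2 hdf) (not_le.2 hc)
    obtain ⟨β, hβ, hβα, hcβ⟩ := hex
    have : ∀ᶠ m in atTop, β < u m := hten.eventually (eventually_gt_nhds hβα)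
    filter_upwards [this] with m hm
    exact lt_of_lt_of_le hcβ (VaR_mono P hY hβ (hu m) hm.le)
  · filter_upwards [] with m
    exact lt_of_le_of_lt (VaR_mono P hY (hu m) hα (hlt m).le) hc


lemma monotoneOn_VaR (hY : Measurable Y) : MonotoneOn (VaR P Y) (Ioo (0:ℝ) 1) :=
  fun _ hα _ hβ h => VaR_mono P hY hα hβ h

lemma aemeasurable_VaR (hY : Measurable Y) :
    AEMeasurable (VaR P Y) (volume.restrict (Ioo (0:ℝ) 1)) :=
  aemeasurable_restrict_of_monotoneOn measurableSet_Ioo (monotoneOn_VaR P hY)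

instance isProb_restrict01 : IsProbabilityMeasure (volume.restrict (Ioo (0:ℝ) 1)) :=
  ⟨by simp⟩

lemma map_VaR (hY : Measurable Y) :
    (volume.restrict (Ioo (0:ℝ) 1)).map (VaR P Y) = P.map Y := by
  have hprob : IsProbabilityMeasure ((volume.restrict (Ioo (0:ℝ) 1)).map (VaR P Y)) :=
    Measure.isProbabilityMeasure_map (aemeasurable_VaR P hY)
  refine MeasureTheory.Measure.ext_of_Iic _ _ (fun a => ?_)
  rw [Measure.map_apply_of_aemeasurable (aemeasurable_VaR P hY) measurableSet_Iic,
    Measure.map_apply hY measurableSet_Iic,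
    Measure.restrict_apply' measurableSet_Ioo]
  have hset : VaR P Y ⁻¹' Iic a ∩ Ioo 0 1 = Ioo (0:ℝ) 1 ∩ Iic (df P Y a) := by
    ext u
    simp only [mem_inter_iff, mem_preimage, mem_Iic, mem_Ioo]
    constructor
    · rintro ⟨h1, h2⟩
      exact ⟨h2, (VaR_le_iff P hY h2).1 h1⟩
    · rintro ⟨h2, h1⟩
      exact ⟨(VaR_le_iff P hY h2).2 h1, h2⟩
  rw [hset]
  have hY' : Y ⁻¹' Iic a = {ω | Y ω ≤ a} := rfl
  rw [hY']
  have hfin : P {ω | Y ω ≤ a} ≠ ⊤ := measure_ne_top _ _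
  rcases lt_or_ge (df P Y a) 1 with h1 | h1
  · have : Ioo (0:ℝ) 1 ∩ Iic (df P Y a) = Ioc (0:ℝ) (df P Y a) := by
      ext u
      simp only [mem_inter_iff, mem_Ioo, mem_Iic, mem_Ioc]
      constructor
      · rintro ⟨⟨hu0, _⟩, hu⟩; exact ⟨hu0, hu⟩
      · rintro ⟨hu0, hu⟩; exact ⟨⟨hu0, lt_of_le_of_lt hu h1⟩, hu⟩
    rw [this, Real.volume_Ioc, sub_zero, df, ENNReal.ofReal_toReal hfin]
  · have heq : df P Y a = 1 := le_antisymm (df_le_one P a) h1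
    have : Ioo (0:ℝ) 1 ∩ Iic (df P Y a) = Ioo (0:ℝ) 1 := by
      rw [heq]
      exact inter_eq_left.2 (fun u hu => le_of_lt hu.2)
    rw [this, Real.volume_Ioo, sub_zero, ENNReal.ofReal_one]
    have := (ENNReal.toReal_eq_one_iff _).1 heq
    exact this.symm

lemma integral_comp_VaR (hY : Measurable Y) {φ : ℝ → ℝ} (hφ : Continuous φ) :
    ∫ u in Ioo (0:ℝ) 1, φ (VaR P Y u) = ∫ ω, φ (Y ω) ∂P := by
  have h1 : ∫ ω, φ (Y ω) ∂P = ∫ x, φ x ∂(P.map Y) :=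
    (integral_map hY.aemeasurable hφ.aestronglyMeasurable).symm
  have h2 : ∫ x, φ x ∂((volume.restrict (Ioo (0:ℝ) 1)).map (VaR P Y)) =
      ∫ u in Ioo (0:ℝ) 1, φ (VaR P Y u) :=
    integral_map (aemeasurable_VaR P hY) hφ.aestronglyMeasurable
  rw [h1, ← map_VaR P hY, h2]

lemma integrable_comp_VaR (hY : Measurable Y) {φ : ℝ → ℝ} (hφ : Continuous φ)
    (hint : Integrable (fun ω => φ (Y ω)) P) :
    Integrable (fun u => φ (VaR P Y u)) (volume.restrict (Ioo (0:ℝ) 1)) := by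
  have h1 : Integrable φ (P.map Y) :=
    (integrable_map_measure hφ.aestronglyMeasurable hY.aemeasurable).2 hint
  rw [← map_VaR P hY] at h1
  exact (integrable_map_measure hφ.aestronglyMeasurable (aemeasurable_VaR P hY)).1 h1

end VaRAux

lemma exists_min_chain {ι E : Type*} [Finite ι] [Nonempty ι] (D : ι → Set E)
    (h : ∀ k l, D k ⊆ D l ∨ D l ⊆ D k) : ∃ k, ∀ l, D k ⊆ D l := by
  obtain ⟨k, -, hk⟩ := Set.Finite.exists_minimalFor D Set.univ Set.finite_univ univ_nonempty
  refine ⟨k, fun l => ?_⟩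
  rcases h k l with h' | h'
  · exact h'
  · exact hk (mem_univ l) h'

lemma exists_max_chain {ι E : Type*} [Finite ι] [Nonempty ι] (D : ι → Set E)
    (h : ∀ k l, D k ⊆ D l ∨ D l ⊆ D k) : ∃ k, ∀ l, D l ⊆ D k := by
  obtain ⟨k, -, hk⟩ := Set.Finite.exists_maximalFor D Set.univ Set.finite_univ univ_nonempty
  refine ⟨k, fun l => ?_⟩
  rcases h k l with h' | h'
  · exact hk (mem_univ l) h'
  · exact h'

lemma measSupport_compl_null {E : Type*} [TopologicalSpace E] [MeasurableSpace E]
    [SecondCountableTopology E] (μ : Measure E) :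
    μ (measSupport μ)ᶜ = 0 := by
  obtain ⟨b, hbc, -, hbasis⟩ := TopologicalSpace.exists_countable_basis E
  have hsub : (measSupport μ)ᶜ ⊆ ⋃₀ {U ∈ b | μ U = 0} := by
    intro x hx
    simp only [measSupport, mem_compl_iff, mem_setOf_eq, not_forall] at hx
    obtain ⟨U, hU, hxU, hμU⟩ := hx
    have hμU' : μ U = 0 := le_zero_iff.1 (not_lt.1 hμU)
    obtain ⟨V, hVb, hxV, hVU⟩ := hbasis.exists_subset_of_mem_open hxU hU
    exact ⟨V, ⟨hVb, measure_mono_null hVU hμU'⟩, hxV⟩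
  refine measure_mono_null hsub ?_
  exact (measure_sUnion_null_iff (hbc.mono (sep_subset _ _))).2 fun U hU => hU.2

lemma subset_compl_of_null {E : Type*} [TopologicalSpace E] [MeasurableSpace E]
    {μ : Measure E} {U : Set E} (hU : IsOpen U) (h : μ U = 0) :
    measSupport μ ⊆ Uᶜ := by
  intro x hx hxU
  exact absurd (hx U hU hxU) (by simp [h])

section Main

open VaRAux

variable {Ω : Type*} [MeasurableSpace Ω] (P : Measure Ω) [IsProbabilityMeasure P]
  {n : ℕ} (X : Fin n → Ω → ℝ)

lemma measurable_vec (hmeas : ∀ i, Measurable (X i)) :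
    Measurable (fun ω (i : Fin n) => X i ω) :=
  measurable_pi_lambda _ hmeas

lemma map_marg (hmeas : ∀ i, Measurable (X i)) (k : Fin n) (t : ℝ) :
    (P.map (fun ω (i : Fin n) => X i ω)) {x | x k ≤ t} = P {ω | X k ω ≤ t} := by
  rw [Measure.map_apply (measurable_vec X hmeas)
    (measurableSet_le (measurable_pi_apply k) measurable_const)]
  rfl

lemma map_sumSet (hmeas : ∀ i, Measurable (X i)) (t : ℝ) :
    (P.map (fun ω (i : Fin n) => X i ω)) {x | ∑ k, x k ≤ t} = P {ω | ∑ k, X k ω ≤ t} := by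
  rw [Measure.map_apply (measurable_vec X hmeas)
    (measurableSet_le (Finset.univ.measurable_sum fun i _ => measurable_pi_apply i)
      measurable_const)]
  rfl

lemma VaR_zero_n {α : ℝ} (hα : α ∈ Ioo (0:ℝ) 1) :
    VaR P (fun _ => (0:ℝ)) α = 0 := by
  have hset : {x : ℝ | α ≤ (P {ω | (0:ℝ) ≤ x}).toReal} = Ici (0:ℝ) := by
    ext x
    simp only [mem_setOf_eq, mem_Ici]
    rcases le_or_gt 0 x with hx | hx
    · have : {ω : Ω | (0:ℝ) ≤ x} = univ := eq_univ_of_forall fun ω => hx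
      simp [this, hα.2.le, hx]
    · have : {ω : Ω | (0:ℝ) ≤ x} = ∅ := eq_empty_of_forall_notMem fun ω h => absurd h (not_le.2 hx)
      simp [this, hx, not_le.2 hα.1, not_le.2 hx]
  rw [VaR, hset, csInf_Ici]

lemma key1 (hmeas : ∀ i, Measurable (X i)) (hC : Comonotonic P X) :
    ∀ α ∈ Ioo (0:ℝ) 1, VaR P (fun ω => ∑ i, X i ω) α = ∑ i, VaR P (X i) α := by
  intro α hα
  rcases Nat.eq_zero_or_pos n with hn | hn
  · subst hn
    simp only [Finset.univ_eq_empty, Finset.sum_empty]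
    exact VaR_zero_n P hα
  haveI : Nonempty (Fin n) := ⟨⟨0, hn⟩⟩
  set μ := P.map (fun ω (i : Fin n) => X i ω) with hμ
  haveI : IsProbabilityMeasure μ := Measure.isProbabilityMeasure_map (measurable_vec X hmeas).aemeasurable
  have hsuppnull : μ (measSupport μ)ᶜ = 0 := measSupport_compl_null μ
  set q := fun k => VaR P (X k) α with hq
  set S := fun ω => ∑ i, X i ω with hSdef
  have hS : Measurable S := Finset.univ.measurable_sum fun i _ => hmeas i
  have hchain : ∀ (t : Fin n → ℝ) (k l : Fin n),
      ({x : Fin n → ℝ | x k ≤ t k} ∩ measSupport μ) ⊆ ({x | x l ≤ t l} ∩ measSupport μ) ∨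
      ({x : Fin n → ℝ | x l ≤ t l} ∩ measSupport μ) ⊆ ({x | x k ≤ t k} ∩ measSupport μ) := by
    intro t k l
    by_contra hcon
    push_neg at hcon
    obtain ⟨u, hu, hu'⟩ := not_subset.1 hcon.1
    obtain ⟨v, hv, hv'⟩ := not_subset.1 hcon.2
    obtain ⟨huk, husupp⟩ := hu
    obtain ⟨hvl, hvsupp⟩ := hv
    have hul : t l < u l := by
      by_contra h; push_neg at h; exact hu' ⟨h, husupp⟩
    have hvk : t k < v k := by
      by_contra h; push_neg at h; exact hv' ⟨h, hvsupp⟩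
    have := hC u husupp v hvsupp ⟨k, lt_of_le_of_lt huk hvk⟩ l
    exact absurd (le_trans this hvl) (not_le.2 hul)
  apply le_antisymm
  · rw [VaR_le_iff P hS hα]
    set D := fun k => ({x : Fin n → ℝ | x k ≤ q k} ∩ measSupport μ) with hD
    obtain ⟨k₀, hk₀⟩ := exists_min_chain D (hchain q)
    have hDsub : D k₀ ⊆ {x : Fin n → ℝ | ∑ k, x k ≤ ∑ k, q k} :=
      fun x hx => show ∑ k, x k ≤ ∑ k, q k from
        Finset.sum_le_sum fun k _ => ((hk₀ k) hx).1
    have h1 : α ≤ (μ (D k₀)).toReal := by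
      have heq : μ (D k₀) = μ {x : Fin n → ℝ | x k₀ ≤ q k₀} :=
        measure_inter_conull hsuppnull
      rw [hD, heq, map_marg P X hmeas]
      exact le_df_VaR P (hmeas k₀) hα
    refine le_trans h1 ?_
    have : df P S (∑ k, q k) = (μ {x : Fin n → ℝ | ∑ k, x k ≤ ∑ k, q k}).toReal := by
      rw [df, map_sumSet P X hmeas]
    rw [this]
    exact ENNReal.toReal_mono (measure_ne_top _ _) (measure_mono hDsub)
  · refine le_csInf (nonempty_df_set P hS hα.2) fun b hb => ?_
    by_contra hb'
    push_neg at hb'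
    set d := (∑ k, q k - b) / n with hd_def
    have hn' : (0:ℝ) < n := by exact_mod_cast hn
    have hd : 0 < d := div_pos (by linarith) hn'
    set t := fun k => q k - d with ht
    have hsumt : ∑ k, t k = b := by
      rw [ht]
      rw [Finset.sum_sub_distrib, Finset.sum_const, Finset.card_univ, Fintype.card_fin]
      rw [hd_def, nsmul_eq_mul]
      field_simp
      ring
    set C := fun k => ({x : Fin n → ℝ | x k ≤ t k} ∩ measSupport μ) with hCdef
    obtain ⟨k₁, hk₁⟩ := exists_max_chain C (hchain t)
    have hsub : {x : Fin n → ℝ | ∑ k, x k ≤ b} ∩ measSupport μ ⊆ C k₁ := by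
      rintro x ⟨hxb, hxs⟩
      have hex : ∃ k, x k ≤ t k := by
        by_contra hno
        push_neg at hno
        have : ∑ k, t k < ∑ k, x k :=
          Finset.sum_lt_sum_of_nonempty Finset.univ_nonempty fun k _ => hno k
        rw [hsumt] at this
        exact absurd hxb (not_le.2 this)
      obtain ⟨k, hk⟩ := hex
      exact hk₁ k ⟨hk, hxs⟩
    have hlt : df P S b < α := by
      have h1 : df P S b = (μ ({x : Fin n → ℝ | ∑ k, x k ≤ b} ∩ measSupport μ)).toReal := by
        rw [df, ← map_sumSet P X hmeas, measure_inter_conull hsuppnull]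
      have h2 : (μ (C k₁)).toReal ≤ df P (X k₁) (t k₁) := by
        have : μ (C k₁) = μ {x : Fin n → ℝ | x k₁ ≤ t k₁} := measure_inter_conull hsuppnull
        rw [hCdef, this, map_marg P X hmeas]
        exact le_refl _
      have h3 : df P (X k₁) (t k₁) < α := by
        rw [← lt_VaR_iff P (hmeas k₁) hα]
        rw [ht]
        simp only
        have : q k₁ = VaR P (X k₁) α := rfl
        linarith [hd]
      calc df P S b = (μ ({x : Fin n → ℝ | ∑ k, x k ≤ b} ∩ measSupport μ)).toReal := h1
        _ ≤ (μ (C k₁)).toReal := ENNReal.toReal_mono (measure_ne_top _ _) (measure_mono hsub)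
        _ ≤ df P (X k₁) (t k₁) := h2
        _ < α := h3
    exact absurd hb (not_le.2 hlt)

set_option maxHeartbeats 1000000 in
lemma key2 (hmeas : ∀ i, Measurable (X i)) (hint : ∀ i, Integrable (X i) P)
    (hA : ∀ α ∈ Ioo (0:ℝ) 1, VaR P (fun ω => ∑ i, X i ω) α ≤ ∑ i, VaR P (X i) α) :
    ∀ α ∈ Ioo (0:ℝ) 1, VaR P (fun ω => ∑ i, X i ω) α = ∑ i, VaR P (X i) α := by
  set S : Ω → ℝ := fun ω => ∑ i, X i ω with hSdef
  have hS : Measurable S := Finset.univ.measurable_sum fun i _ => hmeas i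
  have hSint : Integrable S P := integrable_finset_sum _ fun i _ => hint i
  set f : ℝ → ℝ := fun u => (∑ i, VaR P (X i) u) - VaR P S u with hf
  have hint_i : ∀ i, Integrable (fun u => VaR P (X i) u) (volume.restrict (Ioo (0:ℝ) 1)) := by
    intro i
    have := integrable_comp_VaR P (hmeas i) (continuous_id) (φ := fun x => x) (hint i)
    exact this
  have hint_S : Integrable (fun u => VaR P S u) (volume.restrict (Ioo (0:ℝ) 1)) := by
    have := integrable_comp_VaR P hS (continuous_id) (φ := fun x => x) hSint
    exact this
  have hint_sum : Integrable (fun u => ∑ i, VaR P (X i) u) (volume.restrict (Ioo (0:ℝ) 1)) :=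
    integrable_finset_sum _ fun i _ => hint_i i
  have hint_f : Integrable f (volume.restrict (Ioo (0:ℝ) 1)) := hint_sum.sub hint_S
  have hintegral : ∫ u in Ioo (0:ℝ) 1, f u = 0 := by
    rw [hf]
    rw [integral_sub hint_sum hint_S]
    rw [integral_finset_sum _ (fun i (_ : i ∈ Finset.univ) => hint_i i)]
    have h1 : ∀ i ∈ Finset.univ, ∫ u in Ioo (0:ℝ) 1, VaR P (X i) u = ∫ ω, X i ω ∂P :=
      fun i _ => integral_comp_VaR P (hmeas i) continuous_id
    have h2 : ∫ u in Ioo (0:ℝ) 1, VaR P S u = ∫ ω, S ω ∂P :=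
      integral_comp_VaR P hS (φ := fun x => x) continuous_id
    rw [Finset.sum_congr rfl h1, h2]
    rw [← integral_finset_sum _ (fun i (_ : i ∈ Finset.univ) => hint i)]
    simp [hSdef]
  have hnonneg : 0 ≤ᵐ[volume.restrict (Ioo (0:ℝ) 1)] f := by
    rw [EventuallyLE, ae_restrict_iff' measurableSet_Ioo]
    exact Eventually.of_forall fun u hu => sub_nonneg.2 (hA u hu)
  have hzero : f =ᵐ[volume.restrict (Ioo (0:ℝ) 1)] 0 :=
    (integral_eq_zero_iff_of_nonneg_ae hnonneg hint_f).1 hintegral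
  have hN : volume ({u | f u ≠ 0} ∩ Ioo (0:ℝ) 1) = 0 := by
    have h := ae_iff.1 hzero
    rw [Measure.restrict_apply' measurableSet_Ioo] at h
    simpa using h
  intro α hα
  refine le_antisymm (hA α hα) ?_
  have hchoice : ∀ m : ℕ, ∃ u, u ∈ Ioo (max (α/2) (α - 1/(m+1))) α ∧ f u = 0 := by
    intro m
    by_contra hno
    push_neg at hno
    have hsub : Ioo (max (α/2) (α - 1/(m+1))) α ⊆ {u | f u ≠ 0} ∩ Ioo (0:ℝ) 1 := by
      intro u hu
      refine ⟨hno u hu, ?_, lt_trans hu.2 hα.2⟩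
      have : (0:ℝ) < α / 2 := by linarith [hα.1]
      exact lt_trans (lt_of_lt_of_le this (le_max_left _ _)) hu.1
    have hvol : volume (Ioo (max (α/2) (α - 1/(m+1))) α) = 0 := measure_mono_null hsub hN
    rw [Real.volume_Ioo, ENNReal.ofReal_eq_zero] at hvol
    have hlt : max (α/2) (α - 1/(m+1)) < α := by
      apply max_lt
      · linarith [hα.1]
      · have : (0:ℝ) < 1/(m+1) := by positivity
        linarith
    linarith
  choose u hu hfu using hchoice
  have humem : ∀ m, u m ∈ Ioo (0:ℝ) 1 := by
    intro m
    refine ⟨?_, lt_trans (hu m).2 hα.2⟩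
    have : (0:ℝ) < α / 2 := by linarith [hα.1]
    exact lt_trans (lt_of_lt_of_le this (le_max_left _ _)) (hu m).1
  have hult : ∀ m, u m < α := fun m => (hu m).2
  have hten : Tendsto u atTop (𝓝 α) := by
    apply tendsto_of_tendsto_of_tendsto_of_le_of_le
      (g := fun m : ℕ => α - 1/(m+1)) (h := fun _ : ℕ => α)
    · have h0 : Tendsto (fun m : ℕ => 1/((m:ℝ)+1)) atTop (𝓝 0) :=
        tendsto_one_div_add_atTop_nhds_zero_nat
      have := tendsto_const_nhds (x := α) (f := atTop (α := ℕ))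
      have := Tendsto.sub this h0
      simpa using this
    · exact tendsto_const_nhds
    · exact fun m => le_trans (le_max_right _ _) (hu m).1.le
    · exact fun m => (hu m).2.le
  have h1 : Tendsto (fun m => VaR P S (u m)) atTop (𝓝 (VaR P S α)) :=
    tendsto_VaR P hS hα humem hult hten
  have h2 : Tendsto (fun m => ∑ i, VaR P (X i) (u m)) atTop (𝓝 (∑ i, VaR P (X i) α)) := by
    apply tendsto_finset_sum
    exact fun i _ => tendsto_VaR P (hmeas i) hα humem hult hten
  have heqseq : (fun m => VaR P S (u m)) = fun m => ∑ i, VaR P (X i) (u m) := by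
    funext m
    have := hfu m
    rw [hf] at this
    simp only [sub_eq_zero] at this
    exact this.symm
  rw [heqseq] at h1
  exact (tendsto_nhds_unique h2 h1).le

set_option maxHeartbeats 1000000 in
lemma align_ae (hmeas : ∀ i, Measurable (X i)) (hint : ∀ i, Integrable (X i) P)
    (hE : ∀ α ∈ Ioo (0:ℝ) 1, VaR P (fun ω => ∑ i, X i ω) α = ∑ i, VaR P (X i) α)
    {α : ℝ} (hα : α ∈ Ioo (0:ℝ) 1) :
    ∀ᵐ ω ∂P, (∀ k, X k ω ≤ VaR P (X k) α) ∨ (∀ k, VaR P (X k) α ≤ X k ω) := by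
  set S : Ω → ℝ := fun ω => ∑ i, X i ω with hSdef
  have hS : Measurable S := Finset.univ.measurable_sum fun i _ => hmeas i
  have hSint : Integrable S P := integrable_finset_sum _ fun i _ => hint i
  set c : Fin n → ℝ := fun k => VaR P (X k) α with hc
  set t : ℝ := ∑ k, c k with ht
  have htS : VaR P S α = t := hE α hα
  set A : Ω → ℝ := fun ω => max (S ω - t) 0 with hA
  set B : Ω → ℝ := fun ω => ∑ k, max (X k ω - c k) 0 with hB
  have hst : ∀ ω, S ω - t = ∑ k, (X k ω - c k) := by
    intro ω
    rw [Finset.sum_sub_distrib]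
  have hAB : ∀ ω, A ω ≤ B ω := by
    intro ω
    apply max_le
    · rw [hst ω]
      exact Finset.sum_le_sum fun k _ => le_max_left _ _
    · exact Finset.sum_nonneg fun k _ => le_max_right _ _
  have hintA : Integrable A P := by
    apply Integrable.mono' (hSint.abs.add (integrable_const |t|))
    · exact ((hS.sub measurable_const).max measurable_const).aestronglyMeasurable
    · refine Eventually.of_forall fun ω => ?_
      have h1 : (0:ℝ) ≤ A ω := le_max_right _ _
      rw [Real.norm_eq_abs, abs_of_nonneg h1]
      apply max_le
      · have := le_abs_self (S ω)
        have := neg_abs_le t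
        simp only [Pi.add_apply]
        linarith
      · simp only [Pi.add_apply]
        have h2 := abs_nonneg (S ω)
        have h3 := abs_nonneg t
        linarith
  have hintk : ∀ k, Integrable (fun ω => max (X k ω - c k) 0) P := by
    intro k
    apply Integrable.mono' ((hint k).abs.add (integrable_const |c k|))
    · exact (((hmeas k).sub measurable_const).max measurable_const).aestronglyMeasurable
    · refine Eventually.of_forall fun ω => ?_
      have h1 : (0:ℝ) ≤ max (X k ω - c k) 0 := le_max_right _ _
      rw [Real.norm_eq_abs, abs_of_nonneg h1]
      apply max_le
      · have := le_abs_self (X k ω)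
        have := neg_abs_le (c k)
        simp only [Pi.add_apply]
        linarith
      · simp only [Pi.add_apply]
        have h2 := abs_nonneg (X k ω)
        have h3 := abs_nonneg (c k)
        linarith
  have hintB : Integrable B P := integrable_finset_sum _ fun k _ => hintk k
  have hIA : ∫ ω, A ω ∂P = ∫ u in Ioo (0:ℝ) 1, max (VaR P S u - t) 0 := by
    have := integral_comp_VaR P hS (φ := fun x => max (x - t) 0)
      ((continuous_id.sub continuous_const).max continuous_const)
    exact this.symm
  have hptw : EqOn (fun u => max (VaR P S u - t) 0)
      (fun u => ∑ k, max (VaR P (X k) u - c k) 0) (Ioo (0:ℝ) 1) := by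
    intro u hu
    simp only
    rcases le_or_gt u α with hua | hua
    · have h1 : ∀ k, VaR P (X k) u ≤ c k := fun k => VaR_mono P (hmeas k) hu hα hua
      have h2 : VaR P S u ≤ t := htS ▸ VaR_mono P hS hu hα hua
      rw [max_eq_right (sub_nonpos.2 h2)]
      symm
      exact Finset.sum_eq_zero fun k _ => max_eq_right (sub_nonpos.2 (h1 k))
    · have h1 : ∀ k, c k ≤ VaR P (X k) u := fun k => VaR_mono P (hmeas k) hα hu hua.le
      have h2 : t ≤ VaR P S u := htS ▸ VaR_mono P hS hα hu hua.le
      rw [max_eq_left (sub_nonneg.2 h2)]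
      rw [Finset.sum_congr rfl fun k _ => max_eq_left (sub_nonneg.2 (h1 k))]
      rw [Finset.sum_sub_distrib, hE u hu, ht]
  have hIB : ∫ ω, B ω ∂P = ∫ u in Ioo (0:ℝ) 1, ∑ k, max (VaR P (X k) u - c k) 0 := by
    rw [hB]
    rw [integral_finset_sum _ (fun k (_ : k ∈ Finset.univ) => hintk k)]
    rw [integral_finset_sum]
    · refine Finset.sum_congr rfl fun k _ => ?_
      have := integral_comp_VaR P (hmeas k) (φ := fun x => max (x - c k) 0)
        ((continuous_id.sub continuous_const).max continuous_const)
      exact this.symm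
    · intro k _
      exact integrable_comp_VaR P (hmeas k) (φ := fun x => max (x - c k) 0)
        ((continuous_id.sub continuous_const).max continuous_const) (hintk k)
  have hIAB : ∫ ω, A ω ∂P = ∫ ω, B ω ∂P := by
    rw [hIA, hIB, setIntegral_congr_fun measurableSet_Ioo hptw]
  have hsub0 : ∫ ω, (B ω - A ω) ∂P = 0 := by
    rw [integral_sub hintB hintA, hIAB, sub_self]
  have hae : (fun ω => B ω - A ω) =ᵐ[P] 0 :=
    (integral_eq_zero_iff_of_nonneg_ae
      (Eventually.of_forall fun ω => sub_nonneg.2 (hAB ω)) (hintB.sub hintA)).1 hsub0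
  filter_upwards [hae] with ω hω
  have heq : A ω = B ω := by
    have : B ω - A ω = 0 := hω
    linarith
  by_cases hpos : ∃ k, 0 < X k ω - c k
  · right
    intro k
    by_contra hk
    push_neg at hk
    obtain ⟨i, hi⟩ := hpos
    have hBi : (0:ℝ) < max (X i ω - c i) 0 := lt_of_lt_of_le hi (le_max_left _ _)
    have h1 : max (X i ω - c i) 0 ≤ B ω :=
      Finset.single_le_sum (fun l (_ : l ∈ Finset.univ) => le_max_right (X l ω - c l) 0)
        (Finset.mem_univ i)
    have h2 : S ω - t < B ω := by
      rw [hst ω, hB]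
      refine Finset.sum_lt_sum (fun l _ => le_max_left _ _) ⟨k, Finset.mem_univ k, ?_⟩
      have : X k ω - c k < 0 := sub_neg.2 hk
      exact lt_of_lt_of_le this (le_max_right _ _)
    have h3 : A ω < B ω := max_lt h2 (lt_of_lt_of_le hBi h1)
    rw [heq] at h3
    exact lt_irrefl _ h3
  · left
    intro k
    push_neg at hpos
    linarith [hpos k]

lemma supp_align (hmeas : ∀ i, Measurable (X i)) (hint : ∀ i, Integrable (X i) P)
    (hE : ∀ α ∈ Ioo (0:ℝ) 1, VaR P (fun ω => ∑ i, X i ω) α = ∑ i, VaR P (X i) α)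
    {α : ℝ} (hα : α ∈ Ioo (0:ℝ) 1) :
    ∀ x ∈ measSupport (P.map (fun ω (i : Fin n) => X i ω)),
      (∀ k, x k ≤ VaR P (X k) α) ∨ (∀ k, VaR P (X k) α ≤ x k) := by
  intro x hx
  set c : Fin n → ℝ := fun k => VaR P (X k) α with hc
  set Bad : Set (Fin n → ℝ) :=
    (⋃ k, {y : Fin n → ℝ | c k < y k}) ∩ (⋃ l, {y : Fin n → ℝ | y l < c l}) with hBad
  have hopen : IsOpen Bad := by
    apply IsOpen.inter
    · exact isOpen_iUnion fun k => isOpen_lt continuous_const (continuous_apply k)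
    · exact isOpen_iUnion fun l => isOpen_lt (continuous_apply l) continuous_const
  have hnull : (P.map (fun ω (i : Fin n) => X i ω)) Bad = 0 := by
    rw [Measure.map_apply (measurable_vec X hmeas) hopen.measurableSet]
    have halign := align_ae P X hmeas hint hE hα
    rw [ae_iff] at halign
    refine measure_mono_null ?_ halign
    intro ω hω
    simp only [hBad, mem_preimage, mem_inter_iff, mem_iUnion, mem_setOf_eq] at hω
    obtain ⟨⟨k, hk⟩, ⟨l, hl⟩⟩ := hω
    show ¬ ((∀ k, X k ω ≤ c k) ∨ (∀ k, c k ≤ X k ω))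
    rintro (h | h)
    · exact absurd (h k) (not_le.2 hk)
    · exact absurd (h l) (not_le.2 hl)
  by_contra hcon
  push_neg at hcon
  obtain ⟨⟨k, hk⟩, ⟨l, hl⟩⟩ := hcon
  have hmem : x ∈ Bad := by
    simp only [hBad, mem_inter_iff, mem_iUnion, mem_setOf_eq]
    exact ⟨⟨k, hk⟩, ⟨l, hl⟩⟩
  have := hx Bad hopen hmem
  rw [hnull] at this
  exact lt_irrefl _ this

set_option maxHeartbeats 2000000 in
lemma key3 (hmeas : ∀ i, Measurable (X i)) (hint : ∀ i, Integrable (X i) P)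
    (hE : ∀ α ∈ Ioo (0:ℝ) 1, VaR P (fun ω => ∑ i, X i ω) α = ∑ i, VaR P (X i) α) :
    Comonotonic P X := by
  intro a ha b hb hex j
  obtain ⟨i, habi⟩ := hex
  by_contra hcon
  push_neg at hcon
  -- notation
  set μ := P.map (fun ω (i : Fin n) => X i ω) with hμ
  haveI : IsProbabilityMeasure μ :=
    Measure.isProbabilityMeasure_map (measurable_vec X hmeas).aemeasurable
  set S : Ω → ℝ := fun ω => ∑ i, X i ω with hSdef
  have hS : Measurable S := Finset.univ.measurable_sum fun i _ => hmeas i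
  have hE' : ∀ α ∈ Ioo (0:ℝ) 1, VaR P S α = ∑ i, VaR P (X i) α := hE
  set ε : ℝ := min ((b i - a i)/4) ((a j - b j)/4) with hεdef
  have hεi : 4*ε ≤ b i - a i := by
    have := min_le_left ((b i - a i)/4) ((a j - b j)/4)
    rw [hεdef]; linarith
  have hεj : 4*ε ≤ a j - b j := by
    have := min_le_right ((b i - a i)/4) ((a j - b j)/4)
    rw [hεdef]; linarith
  have hεpos : 0 < ε := by
    rw [hεdef]
    apply lt_min
    · linarith
    · linarith
  -- box positivity
  have hbox : ∀ z ∈ measSupport μ, ∀ δ : ℝ, 0 < δ →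
      0 < μ {x : Fin n → ℝ | ∀ k, |x k - z k| < δ} := by
    intro z hz δ hδ
    have hopen : IsOpen {x : Fin n → ℝ | ∀ k, |x k - z k| < δ} := by
      have heq : {x : Fin n → ℝ | ∀ k, |x k - z k| < δ} =
          Set.pi univ (fun k => Ioo (z k - δ) (z k + δ)) := by
        ext x
        simp only [mem_setOf_eq, Set.mem_pi, mem_univ, forall_true_left, mem_Ioo, true_implies]
        constructor
        · intro h k
          have := abs_lt.1 (h k)
          constructor <;> linarith [this.1, this.2]
        · intro h k
          rw [abs_lt]
          constructor <;> linarith [(h k).1, (h k).2]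
      rw [heq]
      exact isOpen_set_pi finite_univ fun k _ => isOpen_Ioo
    exact hz _ hopen (fun k => by simpa using hδ)
  have hbox_a : ∀ δ : ℝ, 0 < δ → 0 < μ {x : Fin n → ℝ | ∀ k, |x k - a k| < δ} :=
    fun δ hδ => hbox a ha δ hδ
  have hbox_b : ∀ δ : ℝ, 0 < δ → 0 < μ {x : Fin n → ℝ | ∀ k, |x k - b k| < δ} :=
    fun δ hδ => hbox b hb δ hδ
  -- df bounds from boxes
  have hdf_eq : ∀ (k : Fin n) (m : ℝ), df P (X k) m = (μ {x : Fin n → ℝ | x k ≤ m}).toReal := by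
    intro k m
    rw [df, hμ, map_marg P X hmeas]
  have hdf_pos : ∀ (k : Fin n) (m : ℝ) (z : Fin n → ℝ), (0 < μ {x : Fin n → ℝ | ∀ l, |x l - z l| < ε}) →
      z k + ε ≤ m → 0 < df P (X k) m := by
    intro k m z hz hm
    rw [hdf_eq]
    apply ENNReal.toReal_pos _ (measure_ne_top _ _)
    have hsub : {x : Fin n → ℝ | ∀ l, |x l - z l| < ε} ⊆ {x : Fin n → ℝ | x k ≤ m} := by
      intro x hx
      have := abs_lt.1 (hx k)
      show x k ≤ m
      linarith [this.2]
    have := lt_of_lt_of_le hz (measure_mono hsub)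
    exact this.ne'
  have hdf_lt_one : ∀ (k : Fin n) (m : ℝ) (z : Fin n → ℝ),
      (0 < μ {x : Fin n → ℝ | ∀ l, |x l - z l| < ε}) →
      m ≤ z k - ε → df P (X k) m < 1 := by
    intro k m z hz hm
    rw [hdf_eq]
    rw [show (1:ℝ) = (μ univ).toReal by simp]
    apply ENNReal.toReal_strict_mono (measure_ne_top _ _)
    have hsub : {x : Fin n → ℝ | ∀ l, |x l - z l| < ε} ⊆ {x : Fin n → ℝ | x k ≤ m}ᶜ := by
      intro x hx
      have := abs_lt.1 (hx k)
      show ¬ x k ≤ m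
      push_neg
      linarith [this.1]
    have hmeasset : MeasurableSet {x : Fin n → ℝ | x k ≤ m} :=
      measurableSet_le (measurable_pi_apply k) measurable_const
    have h1 : μ {x : Fin n → ℝ | x k ≤ m} + μ {x : Fin n → ℝ | ∀ l, |x l - z l| < ε} ≤
        μ {x : Fin n → ℝ | x k ≤ m} + μ ({x : Fin n → ℝ | x k ≤ m}ᶜ) := by
      gcongr
    rw [measure_add_measure_compl hmeasset] at h1
    by_contra hcon'
    push_neg at hcon'
    have h2 : μ univ ≤ μ {x : Fin n → ℝ | x k ≤ m} := hcon'
    have h3 : μ univ + μ {x : Fin n → ℝ | ∀ l, |x l - z l| < ε} ≤ μ univ :=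
      le_trans (by gcongr) h1
    have h4 : μ {x : Fin n → ℝ | ∀ l, |x l - z l| < ε} = 0 := by
      have huniv : μ univ = 1 := measure_univ
      rw [huniv] at h3
      by_contra h5
      have : (1:ℝ≥0∞) + μ {x : Fin n → ℝ | ∀ l, |x l - z l| < ε} > 1 :=
        ENNReal.lt_add_right (by simp) h5
      exact absurd h3 (not_le.2 this)
    rw [h4] at hz
    exact lt_irrefl _ hz
  -- case split
  by_cases hsplit : ∃ m ∈ Ioo (a i + ε) (b i - ε), ∃ m' ∈ Ioo (b j + ε) (a j - ε),
      df P (X i) m ≠ df P (X j) m'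
  · -- Case 1
    obtain ⟨m, hm, m', hm', hne⟩ := hsplit
    have hβpos : 0 < df P (X i) m :=
      hdf_pos i m a (hbox_a ε hεpos) (by linarith [hm.1])
    have hβlt : df P (X i) m < 1 :=
      hdf_lt_one i m b (hbox_b ε hεpos) (by linarith [hm.2])
    have hγpos : 0 < df P (X j) m' :=
      hdf_pos j m' b (hbox_b ε hεpos) (by linarith [hm'.1])
    have hγlt : df P (X j) m' < 1 :=
      hdf_lt_one j m' a (hbox_a ε hεpos) (by linarith [hm'.2])
    rcases lt_or_gt_of_ne hne with hlt | hgt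
    · -- β < γ : use point a at level α between
      set α := (df P (X i) m + df P (X j) m') / 2 with hαdef
      have hαIoo : α ∈ Ioo (0:ℝ) 1 := by
        constructor
        · rw [hαdef]; linarith
        · rw [hαdef]; linarith
      have h1 : m < VaR P (X i) α :=
        (lt_VaR_iff P (hmeas i) hαIoo).2 (by rw [hαdef]; linarith)
      have h2 : VaR P (X j) α ≤ m' :=
        (VaR_le_iff P (hmeas j) hαIoo).2 (by rw [hαdef]; linarith)
      rcases supp_align P X hmeas hint hE hαIoo a ha with hL | hR
      · have := hL j
        have : a j ≤ m' := le_trans this h2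
        linarith [hm'.2]
      · have := hR i
        linarith [hm.1]
    · -- γ < β : use point b
      set α := (df P (X i) m + df P (X j) m') / 2 with hαdef
      have hαIoo : α ∈ Ioo (0:ℝ) 1 := by
        constructor
        · rw [hαdef]; linarith
        · rw [hαdef]; linarith
      have h1 : m' < VaR P (X j) α :=
        (lt_VaR_iff P (hmeas j) hαIoo).2 (by rw [hαdef]; linarith)
      have h2 : VaR P (X i) α ≤ m :=
        (VaR_le_iff P (hmeas i) hαIoo).2 (by rw [hαdef]; linarith)
      rcases supp_align P X hmeas hint hE hαIoo b hb with hL | hR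
      · have := hL i
        linarith [hm.2]
      · have := hR j
        linarith [hm'.1]
  · -- Case 2: constant distribution functions on the two gaps
    push_neg at hsplit
    have hmi : a i + 2*ε ∈ Ioo (a i + ε) (b i - ε) := by
      constructor <;> [linarith; linarith]
    have hmj : b j + 2*ε ∈ Ioo (b j + ε) (a j - ε) := by
      constructor <;> [linarith; linarith]
    set α₀ := df P (X i) (a i + 2*ε) with hα₀def
    have hα₀Ioo : α₀ ∈ Ioo (0:ℝ) 1 := by
      constructor
      · exact hdf_pos i _ a (hbox_a ε hεpos) (by linarith)
      · exact hdf_lt_one i _ b (hbox_b ε hεpos) (by linarith)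
    have hconsti : ∀ m ∈ Ioo (a i + ε) (b i - ε), df P (X i) m = α₀ := by
      intro m hm
      rw [hsplit m hm (b j + 2*ε) hmj, hα₀def, hsplit (a i + 2*ε) hmi (b j + 2*ε) hmj]
    have hconstj : ∀ m' ∈ Ioo (b j + ε) (a j - ε), df P (X j) m' = α₀ := by
      intro m' hm'
      rw [← hsplit (a i + 2*ε) hmi m' hm', hα₀def]
    -- quantile bounds
    have hgi0 : VaR P (X i) α₀ ≤ a i + ε := by
      by_contra h
      push_neg at h
      set m := (a i + ε + min (VaR P (X i) α₀) (b i - ε))/2 with hmdef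
      have hmlow : a i + ε < m := by
        rw [hmdef]
        have h1 : a i + ε < min (VaR P (X i) α₀) (b i - ε) := lt_min h (by linarith)
        linarith
      have hmhigh : m < b i - ε := by
        rw [hmdef]
        have h1 : min (VaR P (X i) α₀) (b i - ε) ≤ b i - ε := min_le_right _ _
        have h2 : a i + ε < b i - ε := by linarith
        linarith [lt_min h (show a i + ε < b i - ε by linarith)]
      have hm2 : m < VaR P (X i) α₀ := by
        rw [hmdef]
        have h1 : a i + ε < min (VaR P (X i) α₀) (b i - ε) := lt_min h (by linarith)
        have h2 : min (VaR P (X i) α₀) (b i - ε) ≤ VaR P (X i) α₀ := min_le_left _ _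
        linarith
      have := (lt_VaR_iff P (hmeas i) hα₀Ioo).1 hm2
      rw [hconsti m ⟨hmlow, hmhigh⟩] at this
      exact lt_irrefl _ this
    have hgj0 : VaR P (X j) α₀ ≤ b j + ε := by
      by_contra h
      push_neg at h
      set m := (b j + ε + min (VaR P (X j) α₀) (a j - ε))/2 with hmdef
      have hmlow : b j + ε < m := by
        rw [hmdef]
        have h1 : b j + ε < min (VaR P (X j) α₀) (a j - ε) := lt_min h (by linarith)
        linarith
      have hmhigh : m < a j - ε := by
        rw [hmdef]
        have h1 : min (VaR P (X j) α₀) (a j - ε) ≤ a j - ε := min_le_right _ _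
        linarith [lt_min h (show b j + ε < a j - ε by linarith)]
      have hm2 : m < VaR P (X j) α₀ := by
        rw [hmdef]
        have h1 : b j + ε < min (VaR P (X j) α₀) (a j - ε) := lt_min h (by linarith)
        have h2 : min (VaR P (X j) α₀) (a j - ε) ≤ VaR P (X j) α₀ := min_le_left _ _
        linarith
      have := (lt_VaR_iff P (hmeas j) hα₀Ioo).1 hm2
      rw [hconstj m ⟨hmlow, hmhigh⟩] at this
      exact lt_irrefl _ this
    have hgi1 : ∀ α ∈ Ioo (0:ℝ) 1, α₀ < α → b i - ε ≤ VaR P (X i) α := by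
      intro α hα hgt
      by_contra h
      push_neg at h
      set m := (max (a i + ε) (VaR P (X i) α) + (b i - ε))/2 with hmdef
      have hmlow : a i + ε < m := by
        rw [hmdef]
        have h1 : max (a i + ε) (VaR P (X i) α) < b i - ε := max_lt (by linarith) h
        have h2 : a i + ε ≤ max (a i + ε) (VaR P (X i) α) := le_max_left _ _
        linarith
      have hmhigh : m < b i - ε := by
        rw [hmdef]
        have h1 : max (a i + ε) (VaR P (X i) α) < b i - ε := max_lt (by linarith) h
        linarith
      have hm2 : VaR P (X i) α < m := by
        rw [hmdef]
        have h1 : max (a i + ε) (VaR P (X i) α) < b i - ε := max_lt (by linarith) h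
        have h2 : VaR P (X i) α ≤ max (a i + ε) (VaR P (X i) α) := le_max_right _ _
        linarith
      have hdfm : df P (X i) m < α := by
        rw [hconsti m ⟨hmlow, hmhigh⟩]
        exact hgt
      have := (lt_VaR_iff P (hmeas i) hα).2 hdfm
      linarith
    -- alignment conclusions at α₀ and above
    have hA1 : ∀ k, VaR P (X k) α₀ ≤ a k := by
      rcases supp_align P X hmeas hint hE hα₀Ioo a ha with hL | hR
      · exfalso
        have := hL j
        linarith [hgj0]
      · exact hR
    have hA3 : ∀ α ∈ Ioo (0:ℝ) 1, α₀ < α → ∀ k, a k ≤ VaR P (X k) α := by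
      intro α hα hgt
      rcases supp_align P X hmeas hint hE hα a ha with hL | hR
      · exact hL
      · exfalso
        have h1 := hR i
        have h2 := hgi1 α hα hgt
        linarith
    -- sums
    set s₀ := ∑ k, VaR P (X k) α₀ with hs₀def
    have hsa1 : s₀ < ∑ k, a k := by
      rw [hs₀def]
      apply Finset.sum_lt_sum (fun k _ => hA1 k)
      exact ⟨j, Finset.mem_univ j, by linarith [hgj0]⟩
    have hsa2 : ∀ α ∈ Ioo (0:ℝ) 1, α₀ < α → (∑ k, a k) + 3*ε ≤ VaR P S α := by
      intro α hα hgt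
      rw [hE' α hα]
      have h1 : ∀ k, a k + (if k = i then 3*ε else 0) ≤ VaR P (X k) α := by
        intro k
        by_cases hk : k = i
        · subst hk
          rw [if_pos rfl]
          have := hgi1 α hα hgt
          linarith
        · simp only [if_neg hk, add_zero]
          exact hA3 α hα hgt k
      calc (∑ k, a k) + 3*ε = ∑ k, (a k + (if k = i then 3*ε else 0)) := by
            rw [Finset.sum_add_distrib, Finset.sum_ite_eq' Finset.univ i (fun _ => 3*ε)]
            simp
        _ ≤ ∑ k, VaR P (X k) α := Finset.sum_le_sum fun k _ => h1 k
    -- choose δ and t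
    set δ : ℝ := min (ε/(n+1)) (((∑ k, a k) - s₀)/(n+1)) with hδdef
    have hδpos : 0 < δ := by
      rw [hδdef]
      apply lt_min
      · positivity
      · have : (0:ℝ) < (∑ k, a k) - s₀ := by linarith
        positivity
    have hδ1 : (n:ℝ)*δ < ε := by
      have h1 : δ ≤ ε/(n+1) := by rw [hδdef]; exact min_le_left _ _
      have h2 : (n:ℝ)*δ ≤ (n:ℝ)*(ε/(n+1)) := by
        apply mul_le_mul_of_nonneg_left h1 (by positivity)
      have h3 : (n:ℝ)*(ε/(n+1)) < ε := by
        rw [mul_div_assoc']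
        rw [div_lt_iff₀ (by positivity)]
        have : (0:ℝ) < n + 1 := by positivity
        nlinarith [hεpos]
      linarith
    have hδ2 : (n:ℝ)*δ < (∑ k, a k) - s₀ := by
      have h1 : δ ≤ ((∑ k, a k) - s₀)/(n+1) := by rw [hδdef]; exact min_le_right _ _
      have h2 : (n:ℝ)*δ ≤ (n:ℝ)*(((∑ k, a k) - s₀)/(n+1)) :=
        mul_le_mul_of_nonneg_left h1 (by positivity)
      have h3 : (n:ℝ)*(((∑ k, a k) - s₀)/(n+1)) < (∑ k, a k) - s₀ := by
        rw [mul_div_assoc']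
        rw [div_lt_iff₀ (by positivity)]
        have hd : (0:ℝ) < (∑ k, a k) - s₀ := by linarith
        nlinarith
      linarith
    set t : ℝ := (∑ k, a k) + (n:ℝ)*δ with htdef
    have hts : ∀ α ∈ Ioo (0:ℝ) 1, α₀ < α → t < VaR P S α := by
      intro α hα hgt
      have := hsa2 α hα hgt
      rw [htdef]
      have : (n:ℝ)*δ < 3*ε := by linarith
      linarith [hsa2 α hα hgt]
    have hflat : df P S t ≤ α₀ := by
      by_contra h
      push_neg at h
      set α := min ((α₀ + df P S t)/2) ((α₀+1)/2) with hαdef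
      have hα₀α : α₀ < α := by
        rw [hαdef]
        apply lt_min
        · linarith
        · linarith [hα₀Ioo.2]
      have hαIoo : α ∈ Ioo (0:ℝ) 1 := by
        constructor
        · linarith [hα₀Ioo.1]
        · rw [hαdef]
          have : (α₀+1)/2 < 1 := by linarith [hα₀Ioo.2]
          exact lt_of_le_of_lt (min_le_right _ _) this
      have hαdf : α ≤ df P S t := by
        rw [hαdef]
        exact le_trans (min_le_left _ _) (by linarith)
      have hVt := (VaR_le_iff P hS hαIoo).2 hαdf
      exact absurd hVt (not_le.2 (hts α hαIoo hα₀α))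
    have hs₀S : VaR P S α₀ = s₀ := hE' α₀ hα₀Ioo
    have hs₀df : α₀ ≤ df P S s₀ := hs₀S ▸ le_df_VaR P hS hα₀Ioo
    have hs₀t : s₀ ≤ t := by
      rw [htdef]
      have : (0:ℝ) ≤ (n:ℝ)*δ := by positivity
      linarith
    have hdfeq : df P S s₀ = df P S t :=
      le_antisymm (df_mono P hs₀t) (le_trans hflat hs₀df)
    have hPeq : μ {x : Fin n → ℝ | ∑ k, x k ≤ s₀} = μ {x : Fin n → ℝ | ∑ k, x k ≤ t} := by
      have h1 : P {ω | S ω ≤ s₀} = P {ω | S ω ≤ t} := by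
        have := hdfeq
        rw [df, df] at this
        exact (ENNReal.toReal_eq_toReal_iff' (measure_ne_top _ _) (measure_ne_top _ _)).1 this
      rw [hμ, map_sumSet P X hmeas, map_sumSet P X hmeas]
      exact h1
    have hring : μ ({x : Fin n → ℝ | ∑ k, x k ≤ t} \ {x : Fin n → ℝ | ∑ k, x k ≤ s₀}) = 0 := by
      have hsub : {x : Fin n → ℝ | ∑ k, x k ≤ s₀} ⊆ {x : Fin n → ℝ | ∑ k, x k ≤ t} :=
        fun x hx => le_trans hx hs₀t
      have hmeas1 : MeasurableSet {x : Fin n → ℝ | ∑ k, x k ≤ s₀} :=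
        measurableSet_le (Finset.univ.measurable_sum fun k _ => measurable_pi_apply k)
          measurable_const
      rw [measure_diff hsub hmeas1.nullMeasurableSet (measure_ne_top _ _)]
      rw [← hPeq]
      exact tsub_self _
    have hboxsub : {x : Fin n → ℝ | ∀ k, |x k - a k| < δ} ⊆
        {x : Fin n → ℝ | ∑ k, x k ≤ t} \ {x : Fin n → ℝ | ∑ k, x k ≤ s₀} := by
      intro x hx
      have hup : ∑ k, x k ≤ t := by
        have h1 : ∀ k, x k ≤ a k + δ := by
          intro k
          have := abs_lt.1 (hx k)
          linarith [this.2]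
        have h2 : ∑ k, x k ≤ ∑ k, (a k + δ) := Finset.sum_le_sum fun k _ => h1 k
        rw [Finset.sum_add_distrib, Finset.sum_const, Finset.card_univ, Fintype.card_fin,
          nsmul_eq_mul] at h2
        rw [htdef]
        linarith
      have hdown : ¬ (∑ k, x k ≤ s₀) := by
        push_neg
        have h1 : ∀ k, a k - δ ≤ x k := by
          intro k
          have := abs_lt.1 (hx k)
          linarith [this.1]
        have h2 : ∑ k, (a k - δ) ≤ ∑ k, x k := Finset.sum_le_sum fun k _ => h1 k
        rw [Finset.sum_sub_distrib, Finset.sum_const, Finset.card_univ, Fintype.card_fin,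
          nsmul_eq_mul] at h2
        have h3 : s₀ < (∑ k, a k) - (n:ℝ)*δ := by linarith
        linarith
      exact ⟨hup, hdown⟩
    have hpos := hbox_a δ hδpos
    have := measure_mono_null hboxsub hring
    rw [this] at hpos
    exact lt_irrefl _ hpos

end Main

theorem VaR_subadditive_iff_comonotonic_iff_additive {Ω : Type*} [MeasurableSpace Ω]
    (P : Measure Ω) [IsProbabilityMeasure P] (hP : Atomless P)
    {n : ℕ} (X : Fin n → Ω → ℝ) (hmeas : ∀ i, Measurable (X i))
    (hint : ∀ i, Integrable (X i) P) :
    ((∀ α ∈ Set.Ioo (0 : ℝ) 1,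
        VaR P (fun ω => ∑ i, X i ω) α ≤ ∑ i, VaR P (X i) α) ↔ Comonotonic P X) ∧
    (Comonotonic P X ↔
      ∀ α ∈ Set.Ioo (0 : ℝ) 1,
        VaR P (fun ω => ∑ i, X i ω) α = ∑ i, VaR P (X i) α) := by
  classical
  have k1 := key1 P X hmeas
  have k2 := key2 P X hmeas hint
  have k3 := key3 P X hmeas hint
  refine ⟨⟨fun hA => k3 (k2 hA), fun hC α hα => (k1 hC α hα).le⟩,
    ⟨fun hC => k1 hC, fun hEq => k3 hEq⟩⟩
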